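/- RLCT additivity for sums in separate variables: if K(w_1, w_2) = K_1(w_1) + K_2(w_2) with K_1, K_2 ≥ 0, and zeta functions ζ_i(z) = ∫ K_i(w_i)^z φ_i(w_i) dw_i have largest poles at −λ_i of order m_i, then ζ(z) = ∫∫ (K_1(w_1)+K_2(w_2))^z φ_1(w_1)φ_2(w_2) dw_1 dw_2 has largest pole at −(λ_1 + λ_2) of order m_1 + m_2 − 1, in the special case where K_1(w_1) = w_1^{2} on [0,1] with φ_1 = 1 and K_2(w_2) = w_2^{2} on [0,1] with φ_2 = 1. -/

import Mathlib

/-!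
The integrand `(u² + v²)^z` is homogeneous of degree `2z`, so shrinking the square by `1/2`
multiplies its integral `ζ(z)` by `2^{-(2 + 2z)}`. Hence the integral `I(z)` over the L-shaped
region between the square and its half, which stays away from the singularity at the origin,
equals `(1 - 2^{-(2 + 2z)}) ζ(z)`. Since `I` is continuous and positive at `z = -1`,
`(z + 1) ζ(z) = (z + 1) / (1 - 2^{-2(z + 1)}) · I(z) → I(-1) / (2 log 2)`.
Convergence for `z > -1` comes from `u² + v² ≥ uv` and Fubini.
-/

open MeasureTheory Filter Set Topology Pointwise Module

section Homogeneous

variable {E F : Type*} [NormedAddCommGroup E] [NormedSpace ℝ E] [MeasurableSpace E] [BorelSpace E]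
  [FiniteDimensional ℝ E] [NormedAddCommGroup F] [NormedSpace ℝ F] (μ : Measure E)
  [μ.IsAddHaarMeasure] {g : E → F} {c d : ℝ}

theorem setIntegral_smul_set_of_homogeneous (hc : 0 < c) (hg : ∀ x, g (c • x) = c ^ d • g x)
    (s : Set E) : ∫ x in c • s, g x ∂μ = c ^ (finrank ℝ E + d) • ∫ x in s, g x ∂μ := by
  have h := Measure.setIntegral_comp_smul_of_pos μ g s hc
  simp only [hg, integral_smul] at h
  rw [Real.rpow_add hc, Real.rpow_natCast, mul_smul, h, smul_inv_smul₀ (by positivity)]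

theorem setIntegral_sdiff_smul_set_of_homogeneous (hc : 0 < c)
    (hg : ∀ x, g (c • x) = c ^ d • g x) {s : Set E} (hs : MeasurableSet s) (hcs : c • s ⊆ s)
    (hgs : IntegrableOn g s μ) :
    ∫ x in s \ c • s, g x ∂μ = (1 - c ^ (finrank ℝ E + d)) • ∫ x in s, g x ∂μ := by
  rw [setIntegral_sdiff (hs.const_smul₀ c) hgs hcs,
    setIntegral_smul_set_of_homogeneous μ hc hg, sub_smul, one_smul]

end Homogeneous

theorem tendsto_div_one_sub_rpow {a : ℝ} (ha : 0 < a) (ha1 : a ≠ 1) :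
    Tendsto (fun t : ℝ => t / (1 - a ^ t)) (𝓝[≠] 0) (𝓝 (-(Real.log a)⁻¹)) := by
  have hslope :=
    hasDerivAt_iff_tendsto_slope.1 (Real.hasStrictDerivAt_const_rpow ha 0).hasDerivAt
  rw [Real.rpow_zero, one_mul] at hslope
  refine (hslope.inv₀ (Real.log_ne_zero_of_pos_of_ne_one ha ha1)).neg.congr fun t => ?_
  rw [slope_def_field, Real.rpow_zero, sub_zero, inv_div, ← div_neg, neg_sub]

namespace RLCT

noncomputable def normSqRpow (z : ℝ) (p : ℝ × ℝ) : ℝ := (p.1 ^ 2 + p.2 ^ 2) ^ z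

def square (c : ℝ) : Set (ℝ × ℝ) := Icc 0 c ×ˢ Icc 0 c

def squareAnnulus : Set (ℝ × ℝ) := square 1 \ (2⁻¹ : ℝ) • square 1

lemma normSqRpow_nonneg (z : ℝ) (p : ℝ × ℝ) : 0 ≤ normSqRpow z p := by
  unfold normSqRpow; positivity

lemma measurable_normSqRpow (z : ℝ) : Measurable (normSqRpow z) := by
  unfold normSqRpow; fun_prop

lemma normSqRpow_smul (z : ℝ) {c : ℝ} (hc : 0 ≤ c) (p : ℝ × ℝ) :
    normSqRpow z (c • p) = c ^ (2 * z) • normSqRpow z p := by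
  simp only [normSqRpow, Prod.smul_fst, Prod.smul_snd, smul_eq_mul]
  rw [show (c * p.1) ^ 2 + (c * p.2) ^ 2 = c ^ 2 * (p.1 ^ 2 + p.2 ^ 2) by ring,
    Real.mul_rpow (by positivity) (by positivity), ← Real.rpow_natCast_mul hc, Nat.cast_ofNat]

lemma normSqRpow_le_rpow_mul_rpow {z : ℝ} (hz : z ≤ 0) {p : ℝ × ℝ} (hx : 0 < p.1)
    (hy : 0 < p.2) : normSqRpow z p ≤ p.1 ^ z * p.2 ^ z := by
  rw [← Real.mul_rpow hx.le hy.le]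
  exact Real.rpow_le_rpow_of_nonpos (by positivity) (by nlinarith [sq_nonneg (p.1 - p.2)]) hz

lemma measurableSet_square (c : ℝ) : MeasurableSet (square c) :=
  measurableSet_Icc.prod measurableSet_Icc

lemma smul_square {c : ℝ} (hc : 0 < c) (a : ℝ) : c • square a = square (c * a) := by
  rw [square, smul_set_prod, LinearOrderedField.smul_Icc hc, mul_zero, square]

lemma smul_square_one_subset {c : ℝ} (hc : 0 < c) (hc1 : c ≤ 1) : c • square 1 ⊆ square 1 := by
  rw [smul_square hc, mul_one]
  exact prod_mono (Icc_subset_Icc_right hc1) (Icc_subset_Icc_right hc1)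

lemma volume_square_one : volume (square 1) = 1 := by
  rw [square, Measure.volume_eq_prod, Measure.prod_prod, Real.volume_Icc]
  norm_num

lemma integrableOn_rpow_mul_rpow_Ioc {z : ℝ} (hz : -1 < z) :
    IntegrableOn (fun p : ℝ × ℝ => p.1 ^ z * p.2 ^ z) (Ioc 0 1 ×ˢ Ioc 0 1) := by
  have h := intervalIntegral.intervalIntegrable_rpow' hz (a := 0) (b := 1)
  rw [intervalIntegrable_iff_integrableOn_Ioc_of_le zero_le_one] at h
  have := h.mul_prod h
  rwa [Measure.prod_restrict, ← Measure.volume_eq_prod] at this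

theorem integrableOn_normSqRpow_square {z : ℝ} (hz : -1 < z) :
    IntegrableOn (normSqRpow z) (square 1) := by
  rcases le_or_gt 0 z with hz0 | hz0
  · have hcont : Continuous (normSqRpow z) :=
      (Real.continuous_rpow_const hz0).comp (by fun_prop)
    exact hcont.continuousOn.integrableOn_compact (isCompact_Icc.prod isCompact_Icc)
  · have hae : Ioc (0 : ℝ) 1 ×ˢ Ioc (0 : ℝ) 1 =ᵐ[volume] square 1 := by
      rw [Measure.volume_eq_prod]
      exact Measure.set_prod_ae_eq Ioc_ae_eq_Icc Ioc_ae_eq_Icc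
    refine IntegrableOn.congr_set_ae ?_ hae.symm
    refine (integrableOn_rpow_mul_rpow_Ioc hz).mono'
      (measurable_normSqRpow z).aestronglyMeasurable ?_
    filter_upwards [ae_restrict_mem (measurableSet_Ioc.prod measurableSet_Ioc)] with p hp
    rw [Real.norm_of_nonneg (normSqRpow_nonneg z p)]
    exact normSqRpow_le_rpow_mul_rpow hz0.le hp.1.1 hp.2.1

lemma measurableSet_squareAnnulus : MeasurableSet squareAnnulus :=
  (measurableSet_square 1).diff ((measurableSet_square 1).const_smul₀ _)

lemma volume_squareAnnulus : volume squareAnnulus = ENNReal.ofReal (3 / 4) := by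
  rw [squareAnnulus, measure_sdiff (smul_square_one_subset (by norm_num) (by norm_num))
    ((measurableSet_square 1).const_smul₀ _).nullMeasurableSet
    (by simp [Measure.addHaar_smul, volume_square_one]), Measure.addHaar_smul, volume_square_one,
    mul_one, ← ENNReal.ofReal_one, ← ENNReal.ofReal_sub _ (abs_nonneg _)]
  norm_num

lemma quarter_lt_of_mem_squareAnnulus {p : ℝ × ℝ} (hp : p ∈ squareAnnulus) :
    4⁻¹ < p.1 ^ 2 + p.2 ^ 2 := by
  rw [squareAnnulus, smul_square (by norm_num), mul_one] at hp
  obtain ⟨⟨⟨hx, -⟩, hy, -⟩, hout⟩ := hp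
  have : 2⁻¹ < p.1 ∨ 2⁻¹ < p.2 := by
    by_contra! h
    exact hout ⟨⟨hx, h.1⟩, hy, h.2⟩
  rcases this with h | h <;> nlinarith

lemma normSqRpow_le_of_mem_squareAnnulus {z : ℝ} (hz : z ∈ Icc (-2) 0) {p : ℝ × ℝ}
    (hp : p ∈ squareAnnulus) : normSqRpow z p ≤ 4⁻¹ ^ (-2 : ℝ) :=
  calc normSqRpow z p ≤ 4⁻¹ ^ z :=
        Real.rpow_le_rpow_of_nonpos (by norm_num) (quarter_lt_of_mem_squareAnnulus hp).le hz.2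
    _ ≤ 4⁻¹ ^ (-2 : ℝ) := Real.rpow_le_rpow_of_exponent_ge (by norm_num) (by norm_num) hz.1

lemma integrableOn_normSqRpow_squareAnnulus {z : ℝ} (hz : z ∈ Icc (-2) 0) :
    IntegrableOn (normSqRpow z) squareAnnulus := by
  refine .of_bound (by simp [volume_squareAnnulus])
    (measurable_normSqRpow z).aestronglyMeasurable (4⁻¹ ^ (-2 : ℝ)) ?_
  filter_upwards [ae_restrict_mem measurableSet_squareAnnulus] with p hp
  rw [Real.norm_of_nonneg (normSqRpow_nonneg z p)]
  exact normSqRpow_le_of_mem_squareAnnulus hz hp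

lemma continuousAt_setIntegral_squareAnnulus :
    ContinuousAt (fun z => ∫ p in squareAnnulus, normSqRpow z p) (-1) := by
  refine continuousAt_of_dominated (bound := fun _ => 4⁻¹ ^ (-2 : ℝ))
    (.of_forall fun z => (measurable_normSqRpow z).aestronglyMeasurable) ?_
    (integrableOn_const (by simp [volume_squareAnnulus])) ?_
  · filter_upwards [Icc_mem_nhds (by norm_num : (-2 : ℝ) < -1) (by norm_num : (-1 : ℝ) < 0)]
      with z hz
    filter_upwards [ae_restrict_mem measurableSet_squareAnnulus] with p hp
    rw [Real.norm_of_nonneg (normSqRpow_nonneg z p)]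
    exact normSqRpow_le_of_mem_squareAnnulus hz hp
  · filter_upwards [ae_restrict_mem measurableSet_squareAnnulus] with p hp
    exact Real.continuousAt_const_rpow (by linarith [quarter_lt_of_mem_squareAnnulus hp])

lemma setIntegral_squareAnnulus_pos : 0 < ∫ p in squareAnnulus, normSqRpow (-1) p := by
  have hpos : ∀ p ∈ squareAnnulus, 0 < normSqRpow (-1) p := fun p hp =>
    Real.rpow_pos_of_pos (by linarith [quarter_lt_of_mem_squareAnnulus hp]) _
  rw [setIntegral_pos_iff_support_of_nonneg_ae
    ((ae_restrict_mem measurableSet_squareAnnulus).mono fun p hp => (hpos p hp).le)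
    (integrableOn_normSqRpow_squareAnnulus (by norm_num)),
    inter_eq_right.2 fun p hp => Function.mem_support.2 (hpos p hp).ne', volume_squareAnnulus]
  norm_num

lemma setIntegral_squareAnnulus_eq {z : ℝ} (hz : -1 < z) :
    ∫ p in squareAnnulus, normSqRpow z p =
      (1 - 2⁻¹ ^ (2 + 2 * z)) * ∫ p in square 1, normSqRpow z p := by
  have h := setIntegral_sdiff_smul_set_of_homogeneous volume (by norm_num : (0 : ℝ) < 2⁻¹)
    (normSqRpow_smul z (by norm_num)) (measurableSet_square 1)
    (smul_square_one_subset (by norm_num) (by norm_num)) (integrableOn_normSqRpow_square hz)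
  simpa [squareAnnulus] using h

end RLCT

open RLCT in
/-- concrete instance of RLCT additivity: the zeta function
`ζ(z) = ∫∫_{[0,1]²} (u² + v²)^z du dv` converges for `z > −1` and has its largest
pole at `z = −1 (= −(1/2 + 1/2))` of order `1 (= 1 + 1 − 1)`: `(z+1)ζ(z)` tends to a
nonzero constant as `z → −1⁺`. -/
theorem rlct_additivity_concrete :
    (∀ z : ℝ, -1 < z →
      IntegrableOn (fun p : ℝ × ℝ => (p.1 ^ 2 + p.2 ^ 2) ^ z)
        (Set.Icc 0 1 ×ˢ Set.Icc 0 1) volume) ∧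
    ∃ C : ℝ, C ≠ 0 ∧
      Tendsto (fun z : ℝ =>
          (z + 1) * ∫ p in Set.Icc (0 : ℝ) 1 ×ˢ Set.Icc (0 : ℝ) 1,
            (p.1 ^ 2 + p.2 ^ 2) ^ z ∂volume)
        (nhdsWithin (-1) (Set.Ioi (-1))) (nhds C) := by
  refine ⟨fun z hz => integrableOn_normSqRpow_square hz,
    2⁻¹ * -(Real.log 2⁻¹)⁻¹ * ∫ p in squareAnnulus, normSqRpow (-1) p, ?_, ?_⟩
  · have hlog : Real.log 2⁻¹ ≠ 0 := Real.log_ne_zero_of_pos_of_ne_one (by norm_num) (by norm_num)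
    exact mul_ne_zero (by simpa using hlog) setIntegral_squareAnnulus_pos.ne'
  have hshift : Tendsto (fun z : ℝ => 2 + 2 * z) (𝓝[>] (-1)) (𝓝[≠] 0) := by
    refine tendsto_nhdsWithin_of_tendsto_nhds_of_eventually_within _
      ((Continuous.tendsto' (by fun_prop) _ _ (by norm_num)).mono_left nhdsWithin_le_nhds) ?_
    filter_upwards [self_mem_nhdsWithin] with z (hz : -1 < z)
    exact (by linarith : 0 < 2 + 2 * z).ne'
  have hlim := (((tendsto_div_one_sub_rpow (a := 2⁻¹) (by norm_num) (by norm_num)).comp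
    hshift).const_mul 2⁻¹).mul
    (continuousAt_setIntegral_squareAnnulus.tendsto.mono_left nhdsWithin_le_nhds)
  refine hlim.congr' ?_
  filter_upwards [self_mem_nhdsWithin] with z (hz : -1 < z)
  have hq : 1 - (2⁻¹ : ℝ) ^ (2 + 2 * z) ≠ 0 :=
    (sub_pos.2 (Real.rpow_lt_one (by norm_num) (by norm_num) (by linarith))).ne'
  change _ = (z + 1) * ∫ p in square 1, normSqRpow z p
  rw [Function.comp_apply, setIntegral_squareAnnulus_eq hz]
  generalize (2⁻¹ : ℝ) ^ (2 + 2 * z) = q at hq ⊢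
  field_simp
  ring
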